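/- arXiv:1906.12156 — 4 statements merged into one kernel-verified Lean document; each statement's English description precedes it below -/
import Mathlib

section
/- For all a > 0 and p > 0, the improper integral ∫_0^∞ t^{-3/2} e^{-a/t − p·t} dt converges and equals √(π/a) · e^{-2√(a·p)}. -/
/-!
Substituting `t = s⁻²` turns the integral into `2 ∫₀^∞ exp (-a s² - p/s²) ds`, and
`a s² + p/s² = (√a s - √p/s)² + 2√(ap)`. The Cauchy–Schlömilch substitution `x = √a s - √p/s`
maps `(0, ∞)` bijectively onto `ℝ` with `dx = (√a + √p/s²) ds`, and the involution
`s ↦ √(p/a)/s` shows that the two summands of this Jacobian contribute equally, so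
`√π = ∫ exp (-x²) dx = 2√a ∫₀^∞ exp (-(√a s - √p/s)²) ds`.
-/
open Real MeasureTheory Set

section ChangeOfVariables

variable {E : Type*} [NormedAddCommGroup E] [NormedSpace ℝ E] {α β γ : ℝ}

theorem hasDerivAt_const_div (γ : ℝ) {s : ℝ} (hs : s ≠ 0) :
    HasDerivAt (fun s : ℝ => γ / s) (-γ / s ^ 2) s := by
  simpa [div_eq_mul_inv, neg_div] using (hasDerivAt_inv hs).const_mul γ

theorem image_const_div_Ioi_zero (hγ : 0 < γ) : (fun s : ℝ => γ / s) '' Ioi 0 = Ioi 0 := by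
  ext y
  refine ⟨?_, fun hy => ⟨γ / y, div_pos hγ hy, div_div_cancel₀ hγ.ne'⟩⟩
  rintro ⟨s, hs, rfl⟩
  exact div_pos hγ hs

theorem integral_Ioi_comp_const_div (f : ℝ → E) (hγ : 0 < γ) :
    ∫ s in Ioi 0, (γ / s ^ 2) • f (γ / s) = ∫ s in Ioi 0, f s := by
  have hinj : InjOn (fun s : ℝ => γ / s) (Ioi 0) := fun s _ t _ h => by
    simpa [hγ.ne'] using congrArg (γ / ·) h
  have hderiv : ∀ s ∈ Ioi (0 : ℝ), HasDerivWithinAt (fun s => γ / s) (-γ / s ^ 2) (Ioi 0) s :=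
    fun s hs => (hasDerivAt_const_div γ (ne_of_gt hs)).hasDerivWithinAt
  have key := integral_image_eq_integral_abs_deriv_smul measurableSet_Ioi hderiv hinj f
  rw [image_const_div_Ioi_zero hγ] at key
  rw [key]
  refine setIntegral_congr_fun measurableSet_Ioi fun s _ => ?_
  rw [neg_div, abs_neg, abs_of_nonneg (by positivity)]

theorem strictMonoOn_mul_sub_div (hα : 0 < α) (hβ : 0 ≤ β) :
    StrictMonoOn (fun s : ℝ => α * s - β / s) (Ioi 0) := by
  intro s hs t _ hst
  have : β / t ≤ β / s := div_le_div_of_nonneg_left hβ hs hst.le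
  have : α * s < α * t := mul_lt_mul_of_pos_left hst hα
  dsimp only
  linarith

theorem image_mul_sub_div_Ioi_zero (hα : 0 < α) (hβ : 0 < β) :
    (fun s : ℝ => α * s - β / s) '' Ioi 0 = univ := by
  refine eq_univ_of_forall fun y => ?_
  -- the positive root of `α s² - y s - β = 0`
  set r := √(y ^ 2 + 4 * α * β)
  have hr : r ^ 2 = y ^ 2 + 4 * α * β := sq_sqrt (by positivity)
  have hyr : |y| < r := by
    rw [← sqrt_sq_eq_abs]
    exact sqrt_lt_sqrt (sq_nonneg y) (by nlinarith [mul_pos hα hβ])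
  have hpos : 0 < (y + r) / (2 * α) := div_pos (by linarith [neg_abs_le y]) (by positivity)
  refine ⟨(y + r) / (2 * α), hpos, ?_⟩
  have : y + r ≠ 0 := by linarith [neg_abs_le y]
  field_simp
  linear_combination hr

theorem hasDerivAt_mul_sub_div (α β : ℝ) {s : ℝ} (hs : s ≠ 0) :
    HasDerivAt (fun s : ℝ => α * s - β / s) (α + β / s ^ 2) s :=
  (((hasDerivAt_id s).const_mul α).sub (hasDerivAt_const_div β hs)).congr_deriv (by ring)

theorem integrableOn_Ioi_comp_mul_sub_div_iff (f : ℝ → E) (hα : 0 < α) (hβ : 0 < β) :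
    IntegrableOn (fun s => (α + β / s ^ 2) • f (α * s - β / s)) (Ioi 0) ↔ Integrable f := by
  have key := integrableOn_image_iff_integrableOn_abs_deriv_smul measurableSet_Ioi
    (fun s hs => (hasDerivAt_mul_sub_div α β (ne_of_gt hs)).hasDerivWithinAt)
    (strictMonoOn_mul_sub_div hα hβ.le).injOn f
  rw [image_mul_sub_div_Ioi_zero hα hβ, integrableOn_univ] at key
  rw [key]
  refine integrableOn_congr_fun (fun s _ => ?_) measurableSet_Ioi
  rw [abs_of_pos (by positivity)]

theorem integral_Ioi_comp_mul_sub_div (f : ℝ → E) (hα : 0 < α) (hβ : 0 < β) :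
    ∫ s in Ioi 0, (α + β / s ^ 2) • f (α * s - β / s) = ∫ x, f x := by
  have key := integral_image_eq_integral_abs_deriv_smul measurableSet_Ioi
    (fun s hs => (hasDerivAt_mul_sub_div α β (ne_of_gt hs)).hasDerivWithinAt)
    (strictMonoOn_mul_sub_div hα hβ.le).injOn f
  rw [image_mul_sub_div_Ioi_zero hα hβ, Measure.restrict_univ] at key
  rw [key]
  refine setIntegral_congr_fun measurableSet_Ioi fun s _ => ?_
  rw [abs_of_pos (by positivity)]

end ChangeOfVariables

theorem integral_Ioi_exp_neg_sq_mul_sub_div {α β : ℝ} (hα : 0 < α) (hβ : 0 < β) :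
    IntegrableOn (fun s => exp (-(α * s - β / s) ^ 2)) (Ioi 0) ∧
    ∫ s in Ioi 0, exp (-(α * s - β / s) ^ 2) = √π / (2 * α) := by
  set F : ℝ → ℝ := fun s => exp (-(α * s - β / s) ^ 2)
  have hG : IntegrableOn (fun s => (α + β / s ^ 2) * F s) (Ioi 0) :=
    (integrableOn_Ioi_comp_mul_sub_div_iff (fun x => exp (-x ^ 2)) hα hβ).2
      (by simpa using integrable_exp_neg_mul_sq one_pos)
  have hGint : ∫ s in Ioi 0, (α + β / s ^ 2) * F s = √π := by
    have hgauss : ∫ x, exp (-x ^ 2) = √π := by simpa using integral_gaussian 1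
    simpa using (integral_Ioi_comp_mul_sub_div (fun x => exp (-x ^ 2)) hα hβ).trans hgauss
  have hF : IntegrableOn F (Ioi 0) := by
    refine (hG.const_mul α⁻¹).mono' (by fun_prop) ?_
    refine (ae_restrict_iff' measurableSet_Ioi).2 (Filter.Eventually.of_forall fun s hs => ?_)
    rw [norm_of_nonneg (exp_pos _).le, ← mul_assoc, inv_mul_eq_div,
      le_mul_iff_one_le_left (exp_pos _), one_le_div hα]
    have : 0 ≤ β / s ^ 2 := by positivity
    linarith
  have hF' : IntegrableOn (fun s => β / s ^ 2 * F s) (Ioi 0) := by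
    refine (hG.sub (hF.const_mul α)).congr_fun (fun s _ => ?_) measurableSet_Ioi
    simp only [Pi.sub_apply]
    ring
  -- the involution `s ↦ (β/α)/s` leaves `F` invariant
  have hhalves : ∫ s in Ioi 0, β / s ^ 2 * F s = α * ∫ s in Ioi 0, F s := by
    rw [← integral_Ioi_comp_const_div F (div_pos hβ hα), ← integral_const_mul]
    refine setIntegral_congr_fun measurableSet_Ioi fun s hs => ?_
    have hs0 : s ≠ 0 := ne_of_gt hs
    simp only [F, smul_eq_mul]
    field_simp
    ring_nf
  refine ⟨hF, ?_⟩
  have hsplit : √π = 2 * α * ∫ s in Ioi 0, F s := by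
    rw [← hGint]
    simp_rw [add_mul]
    rw [integral_add (hF.const_mul α) hF', integral_const_mul, hhalves]
    ring
  rw [hsplit]
  field_simp

theorem integral_Ioi_exp_neg_mul_sq_sub_div_sq {a b : ℝ} (ha : 0 < a) (hb : 0 < b) :
    IntegrableOn (fun s => exp (-a * s ^ 2 - b / s ^ 2)) (Ioi 0) ∧
    ∫ s in Ioi 0, exp (-a * s ^ 2 - b / s ^ 2) = √(π / a) / 2 * exp (-2 * √(a * b)) := by
  obtain ⟨hF, hFint⟩ := integral_Ioi_exp_neg_sq_mul_sub_div (sqrt_pos.2 ha) (sqrt_pos.2 hb)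
  -- completing the square: `a s² + b/s² = (√a s - √b/s)² + 2√(ab)`
  have hsq : EqOn (fun s => exp (-a * s ^ 2 - b / s ^ 2))
      (fun s => exp (-2 * √(a * b)) * exp (-(√a * s - √b / s) ^ 2)) (Ioi 0) := fun s hs => by
    have hs0 : s ≠ 0 := ne_of_gt hs
    dsimp only
    rw [← exp_add, sqrt_mul ha.le]
    congr 1
    field_simp
    linear_combination (s ^ 4) * sq_sqrt ha.le + sq_sqrt hb.le
  refine ⟨IntegrableOn.congr_fun (hF.const_mul _) hsq.symm measurableSet_Ioi, ?_⟩
  rw [setIntegral_congr_fun measurableSet_Ioi hsq, integral_const_mul, hFint,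
    sqrt_div' π ha.le]
  ring

/-- Laplace-transform identity: for `a > 0` and `p > 0`,
`∫_0^∞ t^(-3/2) e^(-a/t - p·t) dt` converges and equals
`√(π/a) · e^(-2√(a·p))`. -/
theorem integral_rpow_neg_three_halves_exp_laplace (a p : ℝ)
    (ha : 0 < a) (hp : 0 < p) :
    IntegrableOn (fun t : ℝ => t ^ (-(3 : ℝ) / 2) * Real.exp (-a / t - p * t))
      (Ioi (0 : ℝ)) ∧
    ∫ t in Ioi (0 : ℝ), t ^ (-(3 : ℝ) / 2) * Real.exp (-a / t - p * t)
      = Real.sqrt (π / a) * Real.exp (-2 * Real.sqrt (a * p)) := by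
  set g : ℝ → ℝ := fun t => t ^ (-(3 : ℝ) / 2) * exp (-a / t - p * t)
  obtain ⟨hK, hKint⟩ := integral_Ioi_exp_neg_mul_sq_sub_div_sq ha hp
  -- the substitution `t = s⁻²`
  have hsubst : EqOn (fun s => (|(-2 : ℝ)| * s ^ ((-2 : ℝ) - 1)) • g (s ^ (-2 : ℝ)))
      (fun s => 2 * exp (-a * s ^ 2 - p / s ^ 2)) (Ioi 0) := fun s hs => by
    have hs : 0 < s := hs
    have hpow : s ^ ((-2 : ℝ) - 1) * (s ^ (-2 : ℝ)) ^ (-(3 : ℝ) / 2) = 1 := by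
      rw [← rpow_mul hs.le, ← rpow_add hs]
      norm_num
    have hrpow : s ^ (-2 : ℝ) = (s ^ 2)⁻¹ := by rw [rpow_neg hs.le, rpow_two]
    simp only [g, smul_eq_mul, abs_neg, abs_two]
    rw [← mul_assoc, mul_assoc 2, hpow, hrpow, div_inv_eq_mul, mul_one, div_eq_mul_inv p]
  refine ⟨?_, ?_⟩
  · rw [← integrableOn_Ioi_comp_rpow_iff g (by norm_num : (-2 : ℝ) ≠ 0)]
    exact IntegrableOn.congr_fun (hK.const_mul 2) hsubst.symm measurableSet_Ioi
  · rw [← integral_comp_rpow_Ioi g (by norm_num : (-2 : ℝ) ≠ 0),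
      setIntegral_congr_fun measurableSet_Ioi hsubst, integral_const_mul, hKint]
    ring
end

section
/- For all a > 0 and β > 0, the improper integral ∫_0^∞ w^{-3/2} e^{-a/w} sin(β·w) dw converges and equals √(π/a) · e^{-√(2aβ)} · sin(√(2aβ)). (This is the imaginary part of the half-line Fourier transform of f(w) = w^{-3/2} e^{-a/w} at frequency β.) -/
/-!
Substituting `w = a / v ^ 2` turns the integral into `(2 / √a) ∫₀^∞ e^{-v²} sin (aβ / v²) dv`,
the imaginary part of `F z = ∫₀^∞ exp (-v² - z / v²) dv` at `z = -i aβ`. For real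
`z = q² > 0` the Cauchy–Schlömilch substitution `u = v - q / v` gives
`F z = (√π / 2) exp (-2 √z)`. Both sides are holomorphic on `0 < re z` and continuous on
`0 ≤ re z`, so the identity persists on the imaginary axis, where
`(-i c) ^ (1 / 2) = √(2c) / 2 · (1 - i)`.
-/

open Real MeasureTheory Set

open Filter Topology

section Substitution

variable {E : Type*} [NormedAddCommGroup E] [NormedSpace ℝ E] {q : ℝ}

theorem image_div_Ioi (hq : 0 < q) : (fun v : ℝ => q / v) '' Ioi 0 = Ioi 0 := by
  refine (image_subset_iff.2 fun v hv => div_pos hq hv).antisymm fun u hu => ?_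
  exact ⟨q / u, div_pos hq hu, div_div_cancel₀ hq.ne'⟩

theorem image_div_sq_Ioi (hq : 0 < q) : (fun v : ℝ => q / v ^ 2) '' Ioi 0 = Ioi 0 := by
  refine (image_subset_iff.2 fun v hv => div_pos hq (pow_pos hv 2)).antisymm fun u hu => ?_
  refine ⟨√(q / u), sqrt_pos.2 (div_pos hq hu), ?_⟩
  simp only [sq_sqrt (div_pos hq hu).le, div_div_cancel₀ hq.ne']

theorem image_sub_div_Ioi (hq : 0 < q) : (fun v : ℝ => v - q / v) '' Ioi 0 = univ := by
  refine eq_univ_of_forall fun u => ?_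
  -- the positive root of `v ^ 2 - u v - q`
  have hs : √(u ^ 2 + 4 * q) ^ 2 = u ^ 2 + 4 * q := sq_sqrt (by positivity)
  have hu : |u| < √(u ^ 2 + 4 * q) := by
    rw [← sqrt_sq_eq_abs]
    exact sqrt_lt_sqrt (sq_nonneg u) (by linarith)
  have hv : 0 < (u + √(u ^ 2 + 4 * q)) / 2 := by linarith [neg_abs_le u]
  have hv' : u + √(u ^ 2 + 4 * q) ≠ 0 := by linarith
  refine ⟨_, hv, ?_⟩
  field_simp
  linear_combination hs

theorem hasDerivWithinAt_div_Ioi (q : ℝ) {v : ℝ} (hv : v ∈ Ioi 0) :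
    HasDerivWithinAt (fun v : ℝ => q / v) (-(q / v ^ 2)) (Ioi 0) v := by
  simpa [div_eq_mul_inv] using ((hasDerivAt_inv hv.out.ne').const_mul q).hasDerivWithinAt

theorem hasDerivWithinAt_div_sq_Ioi (q : ℝ) {v : ℝ} (hv : v ∈ Ioi 0) :
    HasDerivWithinAt (fun v : ℝ => q / v ^ 2) (-(2 * q / v ^ 3)) (Ioi 0) v := by
  have := ((hasDerivAt_pow 2 v).inv (pow_ne_zero 2 hv.out.ne')).const_mul q
  refine (this.hasDerivWithinAt (s := Ioi 0)).congr_deriv ?_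
  have := hv.out.ne'
  field_simp
  ring

theorem hasDerivWithinAt_sub_div_Ioi (q : ℝ) {v : ℝ} (hv : v ∈ Ioi 0) :
    HasDerivWithinAt (fun v : ℝ => v - q / v) (1 + q / v ^ 2) (Ioi 0) v :=
  (((hasDerivAt_id' v).hasDerivWithinAt).sub (hasDerivWithinAt_div_Ioi q hv)).congr_deriv
    (sub_neg_eq_add 1 _)

theorem injOn_div_Ioi (hq : 0 < q) : InjOn (fun v : ℝ => q / v) (Ioi 0) :=
  StrictAntiOn.injOn fun _ hx _ _ hxy => div_lt_div_of_pos_left hq hx hxy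

theorem injOn_div_sq_Ioi (hq : 0 < q) : InjOn (fun v : ℝ => q / v ^ 2) (Ioi 0) :=
  StrictAntiOn.injOn fun _ hx _ _ hxy =>
    div_lt_div_of_pos_left hq (pow_pos hx 2) (pow_lt_pow_left₀ hxy (le_of_lt hx) two_ne_zero)

theorem injOn_sub_div_Ioi (hq : 0 < q) : InjOn (fun v : ℝ => v - q / v) (Ioi 0) :=
  StrictMonoOn.injOn fun _ hx _ _ hxy =>
    sub_lt_sub hxy (div_lt_div_of_pos_left hq hx hxy)

theorem integral_Ioi_comp_div (hq : 0 < q) (g : ℝ → E) :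
    ∫ v in Ioi 0, (q / v ^ 2) • g (q / v) = ∫ v in Ioi 0, g v := by
  conv_rhs => rw [← image_div_Ioi hq,
    integral_image_eq_integral_abs_deriv_smul measurableSet_Ioi
      (fun v => hasDerivWithinAt_div_Ioi q) (injOn_div_Ioi hq)]
  refine setIntegral_congr_fun measurableSet_Ioi fun v hv => ?_
  rw [abs_neg, abs_of_pos (div_pos hq (pow_pos hv 2))]

theorem integrableOn_Ioi_comp_div_sq_iff (hq : 0 < q) (g : ℝ → E) :
    IntegrableOn (fun v => (2 * q / v ^ 3) • g (q / v ^ 2)) (Ioi 0) ↔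
      IntegrableOn g (Ioi 0) := by
  conv_rhs => rw [← image_div_sq_Ioi hq,
    integrableOn_image_iff_integrableOn_abs_deriv_smul measurableSet_Ioi
      (fun v => hasDerivWithinAt_div_sq_Ioi q) (injOn_div_sq_Ioi hq)]
  refine integrableOn_congr_fun (fun v hv => ?_) measurableSet_Ioi
  rw [abs_neg, abs_of_pos (div_pos (mul_pos two_pos hq) (pow_pos hv 3))]

theorem integral_Ioi_comp_div_sq (hq : 0 < q) (g : ℝ → E) :
    ∫ v in Ioi 0, (2 * q / v ^ 3) • g (q / v ^ 2) = ∫ w in Ioi 0, g w := by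
  conv_rhs => rw [← image_div_sq_Ioi hq,
    integral_image_eq_integral_abs_deriv_smul measurableSet_Ioi
      (fun v => hasDerivWithinAt_div_sq_Ioi q) (injOn_div_sq_Ioi hq)]
  refine setIntegral_congr_fun measurableSet_Ioi fun v hv => ?_
  rw [abs_neg, abs_of_pos (div_pos (mul_pos two_pos hq) (pow_pos hv 3))]

theorem integrableOn_Ioi_comp_sub_div_iff (hq : 0 < q) (g : ℝ → E) :
    IntegrableOn (fun v => (1 + q / v ^ 2) • g (v - q / v)) (Ioi 0) ↔ Integrable g := by
  rw [← integrableOn_univ, ← image_sub_div_Ioi hq,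
    integrableOn_image_iff_integrableOn_abs_deriv_smul measurableSet_Ioi
      (fun v => hasDerivWithinAt_sub_div_Ioi q) (injOn_sub_div_Ioi hq)]
  refine integrableOn_congr_fun (fun v _ => ?_) measurableSet_Ioi
  rw [abs_of_pos (by positivity)]

theorem integral_Ioi_comp_sub_div (hq : 0 < q) (g : ℝ → E) :
    ∫ v in Ioi 0, (1 + q / v ^ 2) • g (v - q / v) = ∫ u, g u := by
  conv_rhs => rw [← setIntegral_univ, ← image_sub_div_Ioi hq,
    integral_image_eq_integral_abs_deriv_smul measurableSet_Ioi
      (fun v => hasDerivWithinAt_sub_div_Ioi q) (injOn_sub_div_Ioi hq)]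
  refine setIntegral_congr_fun measurableSet_Ioi fun v _ => ?_
  rw [abs_of_pos (by positivity)]

end Substitution

theorem integrable_exp_neg_sq : Integrable fun u : ℝ => exp (-u ^ 2) := by
  simpa using integrable_exp_neg_mul_sq one_pos

theorem exp_neg_sq_sub_div_sq (q : ℝ) {v : ℝ} (hv : v ≠ 0) :
    exp (-v ^ 2 - q ^ 2 / v ^ 2) = exp (-(2 * q)) * exp (-(v - q / v) ^ 2) := by
  rw [← exp_add]
  congr 1
  field_simp
  ring

-- Cauchy–Schlömilch: `v ↦ q / v` preserves the integrand, while `u = v - q / v` turns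
-- `(1 + q / v ^ 2) dv` into the Gaussian measure on the whole line.
theorem integral_exp_neg_sub_div_sq {q : ℝ} (hq : 0 < q) :
    ∫ v in Ioi 0, exp (-(v - q / v) ^ 2) = √π / 2 := by
  set E : ℝ → ℝ := fun v => exp (-(v - q / v) ^ 2)
  have hE_symm : ∀ v ∈ Ioi (0 : ℝ), E (q / v) = E v := fun v hv => by
    simp only [E, div_div_cancel₀ hq.ne']
    rw [← neg_sub v, neg_sq]
  have hsum : IntegrableOn (fun v => (1 + q / v ^ 2) * E v) (Ioi 0) :=
    (integrableOn_Ioi_comp_sub_div_iff hq _).2 integrable_exp_neg_sq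
  have hE : IntegrableOn E (Ioi 0) := by
    refine hsum.mono' (by fun_prop) (ae_restrict_of_forall_mem measurableSet_Ioi fun v _ => ?_)
    rw [norm_of_nonneg (exp_pos _).le]
    exact le_mul_of_one_le_left (exp_pos _).le (le_add_of_nonneg_right (by positivity))
  have hqE : IntegrableOn (fun v => q / v ^ 2 * E v) (Ioi 0) :=
    (hsum.sub hE).congr_fun (fun v _ => by simp only [Pi.sub_apply]; ring) measurableSet_Ioi
  have hqE_eq : ∫ v in Ioi 0, q / v ^ 2 * E v = ∫ v in Ioi 0, E v := by
    rw [← integral_Ioi_comp_div hq E]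
    exact setIntegral_congr_fun measurableSet_Ioi fun v hv => by rw [smul_eq_mul, hE_symm v hv]
  have hsum_eq : ∫ v in Ioi 0, (1 + q / v ^ 2) * E v = √π := by
    have := integral_Ioi_comp_sub_div hq fun u => exp (-u ^ 2)
    simp only [smul_eq_mul] at this
    exact this.trans (by simpa using integral_gaussian 1)
  have hsplit : ∫ v in Ioi 0, (1 + q / v ^ 2) * E v
      = (∫ v in Ioi 0, E v) + ∫ v in Ioi 0, q / v ^ 2 * E v := by
    rw [← integral_add hE hqE]
    exact setIntegral_congr_fun measurableSet_Ioi fun v _ => by ring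
  linarith

theorem integral_exp_neg_sq_sub_div_sq {p : ℝ} (hp : 0 < p) :
    ∫ v in Ioi 0, exp (-v ^ 2 - p / v ^ 2) = √π / 2 * exp (-2 * √p) := by
  obtain ⟨q, hq, rfl⟩ : ∃ q, 0 < q ∧ q ^ 2 = p := ⟨√p, sqrt_pos.2 hp, sq_sqrt hp.le⟩
  calc ∫ v in Ioi 0, exp (-v ^ 2 - q ^ 2 / v ^ 2)
      = ∫ v in Ioi 0, exp (-(2 * q)) * exp (-(v - q / v) ^ 2) :=
        setIntegral_congr_fun measurableSet_Ioi fun v hv => exp_neg_sq_sub_div_sq q hv.out.ne'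
    _ = √π / 2 * exp (-2 * √(q ^ 2)) := by
        rw [integral_const_mul, integral_exp_neg_sub_div_sq hq, sqrt_sq hq.le]
        ring_nf

open scoped Complex

noncomputable def gaussianRecipIntegral (z : ℂ) : ℂ :=
  ∫ v in Ioi (0 : ℝ), cexp (-(v : ℂ) ^ 2 - z / (v : ℂ) ^ 2)

theorem norm_cexp_neg_sq_sub_div_sq (z : ℂ) (v : ℝ) :
    ‖cexp (-(v : ℂ) ^ 2 - z / (v : ℂ) ^ 2)‖ = exp (-v ^ 2 - z.re / v ^ 2) := by
  rw [Complex.norm_exp, ← Complex.ofReal_pow, Complex.sub_re, Complex.neg_re, Complex.ofReal_re,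
    Complex.div_ofReal_re]

theorem norm_cexp_neg_sq_sub_div_sq_le {z : ℂ} (hz : 0 ≤ z.re) (v : ℝ) :
    ‖cexp (-(v : ℂ) ^ 2 - z / (v : ℂ) ^ 2)‖ ≤ exp (-v ^ 2) := by
  rw [norm_cexp_neg_sq_sub_div_sq]
  exact exp_le_exp.2 (sub_le_self _ (div_nonneg hz (sq_nonneg v)))

theorem integrableOn_cexp_neg_sq_sub_div_sq {z : ℂ} (hz : 0 ≤ z.re) :
    IntegrableOn (fun v : ℝ => cexp (-(v : ℂ) ^ 2 - z / (v : ℂ) ^ 2)) (Ioi 0) :=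
  integrable_exp_neg_sq.integrableOn.mono' (by fun_prop)
    (ae_of_all _ (norm_cexp_neg_sq_sub_div_sq_le hz))

theorem continuousOn_gaussianRecipIntegral :
    ContinuousOn gaussianRecipIntegral {z | 0 ≤ z.re} :=
  continuousOn_of_dominated (fun _ _ => by fun_prop)
    (fun _ hz => ae_of_all _ (norm_cexp_neg_sq_sub_div_sq_le hz))
    integrable_exp_neg_sq.integrableOn (ae_of_all _ fun _ => by fun_prop)

-- With `t = 1 / v ^ 2`, the factor `t * exp (-z.re * t)` is at most `exp (-1) / r`.
theorem norm_cexp_neg_sq_sub_div_sq_mul_le {z : ℂ} {r : ℝ} (hr : 0 < r) (hz : r ≤ z.re) (v : ℝ) :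
    ‖cexp (-(v : ℂ) ^ 2 - z / (v : ℂ) ^ 2) * -(1 / (v : ℂ) ^ 2)‖
      ≤ exp (-1) / r * exp (-v ^ 2) := by
  have ht : 0 ≤ 1 / v ^ 2 := by positivity
  have key : r * (1 / v ^ 2) * exp (-(r * (1 / v ^ 2))) ≤ exp (-1) :=
    mul_exp_neg_le_exp_neg_one _
  rw [norm_mul, norm_cexp_neg_sq_sub_div_sq, norm_neg, ← Complex.ofReal_pow,
    ← Complex.ofReal_one, ← Complex.ofReal_div, Complex.norm_real, norm_of_nonneg ht,
    sub_eq_add_neg, exp_add]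
  calc exp (-v ^ 2) * exp (-(z.re / v ^ 2)) * (1 / v ^ 2)
      ≤ exp (-v ^ 2) * exp (-(r * (1 / v ^ 2))) * (1 / v ^ 2) := by
        gcongr
        rw [mul_one_div]
        exact div_le_div_of_nonneg_right hz (sq_nonneg v)
    _ = exp (-v ^ 2) * (r * (1 / v ^ 2) * exp (-(r * (1 / v ^ 2)))) / r := by field_simp
    _ ≤ exp (-v ^ 2) * exp (-1) / r := by gcongr
    _ = exp (-1) / r * exp (-v ^ 2) := by ring

theorem differentiableAt_gaussianRecipIntegral {z₀ : ℂ} (hz₀ : 0 < z₀.re) :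
    DifferentiableAt ℂ gaussianRecipIntegral z₀ := by
  obtain ⟨r, hr, hz₀r⟩ : ∃ r, 0 < r ∧ z₀.re = 2 * r := ⟨z₀.re / 2, half_pos hz₀, by ring⟩
  have hre : ∀ z ∈ Metric.ball z₀ r, r ≤ z.re := fun z hz => by
    have := (abs_le.1 ((Complex.abs_re_le_norm (z - z₀)).trans (mem_ball_iff_norm.1 hz).le)).1
    simp only [Complex.sub_re] at this
    linarith
  have h_diff : ∀ (v : ℝ) (z : ℂ), HasDerivAt (fun z => cexp (-(v : ℂ) ^ 2 - z / (v : ℂ) ^ 2))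
      (cexp (-(v : ℂ) ^ 2 - z / (v : ℂ) ^ 2) * -(1 / (v : ℂ) ^ 2)) z := fun v z => by
    simpa [div_eq_mul_inv] using
      (((hasDerivAt_id z).div_const ((v : ℂ) ^ 2)).const_sub (-(v : ℂ) ^ 2)).cexp
  exact (hasDerivAt_integral_of_dominated_loc_of_deriv_le (μ := volume.restrict (Ioi 0))
    (F := fun z (v : ℝ) => cexp (-(v : ℂ) ^ 2 - z / (v : ℂ) ^ 2)) (Metric.ball_mem_nhds z₀ hr)
    (Eventually.of_forall fun _ => by fun_prop) (integrableOn_cexp_neg_sq_sub_div_sq hz₀.le)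
    (by fun_prop)
    (ae_of_all _ fun v z hz => norm_cexp_neg_sq_sub_div_sq_mul_le hr (hre z hz) v)
    (integrable_exp_neg_sq.integrableOn.const_mul _)
    (ae_of_all _ fun v z _ => h_diff v z)).2.differentiableAt

theorem gaussianRecipIntegral_ofReal {p : ℝ} (hp : 0 < p) :
    gaussianRecipIntegral p = ((√π / 2 : ℝ) : ℂ) * cexp (-2 * (p : ℂ) ^ (1 / 2 : ℂ)) := by
  have hsqrt : (p : ℂ) ^ (1 / 2 : ℂ) = ((√p : ℝ) : ℂ) := by
    rw [sqrt_eq_rpow, Complex.ofReal_cpow hp.le]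
    norm_num
  rw [gaussianRecipIntegral, hsqrt]
  calc ∫ v in Ioi (0 : ℝ), cexp (-(v : ℂ) ^ 2 - p / (v : ℂ) ^ 2)
      = ∫ v in Ioi (0 : ℝ), ((exp (-v ^ 2 - p / v ^ 2) : ℝ) : ℂ) := by
        congr 1 with v
        push_cast
        rfl
    _ = _ := by
        rw [integral_complex_ofReal, integral_exp_neg_sq_sub_div_sq hp]
        push_cast
        rfl

theorem gaussianRecipIntegral_eqOn_re_pos :
    EqOn gaussianRecipIntegral (fun z => ((√π / 2 : ℝ) : ℂ) * cexp (-2 * z ^ (1 / 2 : ℂ)))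
      {z | 0 < z.re} := by
  have hU : IsOpen {z : ℂ | 0 < z.re} := isOpen_lt continuous_const Complex.continuous_re
  have hF : AnalyticOnNhd ℂ gaussianRecipIntegral {z | 0 < z.re} :=
    DifferentiableOn.analyticOnNhd
      (fun z hz => (differentiableAt_gaussianRecipIntegral hz).differentiableWithinAt) hU
  have hG : AnalyticOnNhd ℂ (fun z => ((√π / 2 : ℝ) : ℂ) * cexp (-2 * z ^ (1 / 2 : ℂ)))
      {z | 0 < z.re} :=
    DifferentiableOn.analyticOnNhd (fun z hz =>
      (((differentiableAt_id.cpow_const (Complex.mem_slitPlane_iff.2 (Or.inl hz))).const_mul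
        _).cexp.const_mul _).differentiableWithinAt) hU
  -- both sides agree at the real points `p > 0`, which accumulate at `1`
  have hreal : ∀ᶠ p : ℝ in 𝓝[≠] 1, gaussianRecipIntegral p
      = ((√π / 2 : ℝ) : ℂ) * cexp (-2 * (p : ℂ) ^ (1 / 2 : ℂ)) :=
    eventually_nhdsWithin_of_eventually_nhds
      ((lt_mem_nhds one_pos).mono fun _ => gaussianRecipIntegral_ofReal)
  refine hF.eqOn_of_preconnected_of_frequently_eq hG (convex_halfSpace_re_gt 0).isPreconnected
    (z₀ := ((1 : ℝ) : ℂ)) (by simp) ?_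
  exact (Complex.continuous_ofReal.continuousWithinAt.tendsto_nhdsWithin
    fun _ hp => Complex.ofReal_injective.ne hp).frequently hreal.frequently

theorem gaussianRecipIntegral_eq {z : ℂ} (hz : 0 ≤ z.re) :
    gaussianRecipIntegral z = ((√π / 2 : ℝ) : ℂ) * cexp (-2 * z ^ (1 / 2 : ℂ)) := by
  refine gaussianRecipIntegral_eqOn_re_pos.of_subset_closure continuousOn_gaussianRecipIntegral
    (fun w hw => ?_) (ofPred_subset_ofPred.2 fun _ => le_of_lt)
    (Complex.closure_setOfPred_lt_re 0).ge hz
  exact (((Complex.continuousAt_cpow_const_of_re_pos (Or.inl hw) (by norm_num)).const_mul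
    _).cexp.const_mul _).continuousWithinAt

theorem cpow_one_half_neg_mul_I {c : ℝ} (hc : 0 < c) :
    (-(c : ℂ) * Complex.I) ^ (1 / 2 : ℂ) = ((√(2 * c) / 2 : ℝ) : ℂ) * (1 - Complex.I) := by
  have hlog : Complex.log (-(c : ℂ) * Complex.I) = (Real.log c : ℂ) - π / 2 * Complex.I := by
    rw [neg_mul, ← mul_neg, Complex.log_ofReal_mul hc (by simp), Complex.log_neg_I]
    ring
  have hexp : exp (Real.log c / 2) = √c := by
    rw [sqrt_eq_rpow, rpow_def_of_pos hc]
    ring_nf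
  have harg : ((Real.log c : ℂ) - π / 2 * Complex.I) * (1 / 2)
      = ((Real.log c / 2 : ℝ) : ℂ) + ((-(π / 4) : ℝ) : ℂ) * Complex.I := by
    push_cast
    ring
  rw [Complex.cpow_def_of_ne_zero (by simp [hc.ne']), hlog, harg, Complex.exp_add,
    ← Complex.ofReal_exp, hexp, Complex.exp_mul_I, ← Complex.ofReal_cos, ← Complex.ofReal_sin,
    cos_neg, sin_neg, cos_pi_div_four, sin_pi_div_four, sqrt_mul zero_le_two]
  push_cast
  ring

theorem im_gaussianRecipIntegral_neg_mul_I {c : ℝ} (hc : 0 < c) :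
    (gaussianRecipIntegral (-(c : ℂ) * Complex.I)).im
      = √π / 2 * (exp (-√(2 * c)) * sin √(2 * c)) := by
  rw [gaussianRecipIntegral_eq (by simp), cpow_one_half_neg_mul_I hc, Complex.im_ofReal_mul,
    Complex.exp_im]
  congr 1
  simp [mul_div_cancel₀]

theorem im_cexp_neg_sq_add_mul_I_div_sq (c v : ℝ) :
    (cexp (-(v : ℂ) ^ 2 - -(c : ℂ) * Complex.I / (v : ℂ) ^ 2)).im
      = exp (-v ^ 2) * sin (c / v ^ 2) := by
  have harg : -(v : ℂ) ^ 2 - -(c : ℂ) * Complex.I / (v : ℂ) ^ 2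
      = ((-v ^ 2 : ℝ) : ℂ) + ((c / v ^ 2 : ℝ) : ℂ) * Complex.I := by
    push_cast
    ring
  rw [harg, Complex.exp_im, Complex.add_re, Complex.add_im, Complex.ofReal_re, Complex.ofReal_im,
    Complex.re_ofReal_mul, Complex.im_ofReal_mul, Complex.I_re, Complex.I_im, mul_zero, add_zero,
    mul_one, zero_add]

theorem integrableOn_exp_neg_sq_mul_sin_div_sq (c : ℝ) :
    IntegrableOn (fun v => exp (-v ^ 2) * sin (c / v ^ 2)) (Ioi 0) := by
  have h := (integrableOn_cexp_neg_sq_sub_div_sq (z := -(c : ℂ) * Complex.I) (by simp)).im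
  simp only [RCLike.im_to_complex, im_cexp_neg_sq_add_mul_I_div_sq] at h
  exact h

theorem integral_exp_neg_sq_mul_sin_div_sq {c : ℝ} (hc : 0 < c) :
    ∫ v in Ioi 0, exp (-v ^ 2) * sin (c / v ^ 2)
      = √π / 2 * (exp (-√(2 * c)) * sin √(2 * c)) := by
  have h := integral_im
    (integrableOn_cexp_neg_sq_sub_div_sq (z := -(c : ℂ) * Complex.I) (by simp))
  simp only [RCLike.im_to_complex, im_cexp_neg_sq_add_mul_I_div_sq] at h
  rw [h, ← gaussianRecipIntegral, im_gaussianRecipIntegral_neg_mul_I hc]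

theorem div_sq_rpow_neg_three_halves {a v : ℝ} (ha : 0 < a) (hv : 0 < v) :
    (a / v ^ 2) ^ (-(3 : ℝ) / 2) = v ^ 3 / (a * √a) := by
  have hx : 0 < √a / v := by positivity
  have hsq : a / v ^ 2 = (√a / v) ^ (2 : ℝ) := by rw [rpow_two, div_pow, sq_sqrt ha.le]
  rw [hsq, ← rpow_mul hx.le, show (2 : ℝ) * (-3 / 2) = -(3 : ℕ) by norm_num, rpow_neg hx.le,
    rpow_natCast, div_pow, inv_div, pow_succ √a 2, sq_sqrt ha.le]

theorem jacobian_smul_rpow_neg_three_halves_exp_sin_div_sq {a v : ℝ} (ha : 0 < a) (β : ℝ)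
    (hv : 0 < v) :
    (2 * a / v ^ 3) •
        ((a / v ^ 2) ^ (-(3 : ℝ) / 2) * exp (-a / (a / v ^ 2)) * sin (β * (a / v ^ 2)))
      = 2 / √a * (exp (-v ^ 2) * sin (a * β / v ^ 2)) := by
  have hsa : 0 < √a := sqrt_pos.2 ha
  rw [smul_eq_mul, div_sq_rpow_neg_three_halves ha hv, neg_div, div_div_cancel₀ ha.ne',
    mul_div_assoc', mul_comm β]
  field_simp

/-- Imaginary part of the half-line Fourier transform of
`f(w) = w^(-3/2) e^(-a/w)`: for `a > 0` and `β > 0`,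
`∫_0^∞ w^(-3/2) e^(-a/w) sin(βw) dw` converges and equals
`√(π/a) · e^(-√(2aβ)) · sin(√(2aβ))`. -/
theorem integral_rpow_neg_three_halves_exp_sin (a β : ℝ)
    (ha : 0 < a) (hβ : 0 < β) :
    IntegrableOn
      (fun w : ℝ => w ^ (-(3 : ℝ) / 2) * Real.exp (-a / w) * Real.sin (β * w))
      (Ioi (0 : ℝ)) ∧
    ∫ w in Ioi (0 : ℝ),
        w ^ (-(3 : ℝ) / 2) * Real.exp (-a / w) * Real.sin (β * w)
      = Real.sqrt (π / a) * Real.exp (-Real.sqrt (2 * a * β))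
          * Real.sin (Real.sqrt (2 * a * β)) := by
  set f : ℝ → ℝ := fun w => w ^ (-(3 : ℝ) / 2) * exp (-a / w) * sin (β * w)
  have hsubst : EqOn (fun v => (2 * a / v ^ 3) • f (a / v ^ 2))
      (fun v => 2 / √a * (exp (-v ^ 2) * sin (a * β / v ^ 2))) (Ioi 0) :=
    fun _ hv => jacobian_smul_rpow_neg_three_halves_exp_sin_div_sq ha β hv
  refine ⟨(integrableOn_Ioi_comp_div_sq_iff ha f).1 (IntegrableOn.congr_fun
    ((integrableOn_exp_neg_sq_mul_sin_div_sq _).const_mul _) hsubst.symm measurableSet_Ioi), ?_⟩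
  rw [← integral_Ioi_comp_div_sq ha f, setIntegral_congr_fun measurableSet_Ioi hsubst,
    integral_const_mul, integral_exp_neg_sq_mul_sin_div_sq (mul_pos ha hβ), sqrt_div' π ha.le,
    ← mul_assoc 2 a β]
  have hsa : 0 < √a := sqrt_pos.2 ha
  field_simp
end

section
/- Let α > 0, f > 0, S ∈ ℝ, φ ∈ ℝ, and define the thermal-wave profile T : (ℝ³ \ {0}) × ℝ → ℝ by T(x,t) = (S/(4πα‖x‖)) · e^{-√(πf/α)·‖x‖} · cos( 2πf·t + φ − √(πf/α)·‖x‖ ). Then T satisfies the homogeneous heat equation ∂T/∂t (x,t) = α·ΔT(x,t) for every t ∈ ℝ and every x ∈ ℝ³ with x ≠ 0; i.e., the attenuated, phase-shifted sinusoidal point-source profile solves the heat equation away from the source. -/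
open Real MeasureTheory Filter Topology

/-!
Away from the origin the Laplacian of a radial function `u(r)/r` on `ℝ³` is `u''(r)/r`, so the
heat equation reduces to the one-dimensional equation `∂ₜu = α ∂ᵣ²u`. The profile is
`u = C · Re exp(iθ - (1 + i)kr)` with `θ = 2πft + φ` and `k = √(πf/α)`; since
`((1 + i)k)² = 2ik²` we get `∂ᵣ²u = 2k² ∂_θ u`, and `2αk² = 2πf = ∂ₜθ`.
-/

/-- The spatial Laplacian `Δf = Σ_{i=1}^{3} ∂²f/∂x_i²` of `f : ℝ³ → ℝ`. -/
noncomputable def laplacian (f : EuclideanSpace ℝ (Fin 3) → ℝ)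
    (x : EuclideanSpace ℝ (Fin 3)) : ℝ :=
  ∑ i : Fin 3,
    deriv (deriv (fun s : ℝ => f (x + s • EuclideanSpace.single i (1 : ℝ)))) 0

/-- The thermal-wave profile of a sinusoidal point source:
`T(x,t) = (S/(4πα‖x‖)) e^(-√(πf/α)‖x‖) cos(2πf·t + φ − √(πf/α)‖x‖)`. -/
noncomputable def thermalWave (α f S φ : ℝ) (x : EuclideanSpace ℝ (Fin 3))
    (t : ℝ) : ℝ :=
  (S / (4 * π * α * ‖x‖)) * Real.exp (-Real.sqrt (π * f / α) * ‖x‖)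
    * Real.cos (2 * π * f * t + φ - Real.sqrt (π * f / α) * ‖x‖)

open scoped RealInnerProductSpace

section RadialCalculus

variable {E : Type*} [NormedAddCommGroup E] [InnerProductSpace ℝ E]

theorem HasDerivAt.norm {f : ℝ → E} {f' : E} {s : ℝ} (hf : HasDerivAt f f' s)
    (h0 : f s ≠ 0) : HasDerivAt (fun t => ‖f t‖) (⟪f s, f'⟫ / ‖f s‖) s := by
  have := hf.norm_sq.sqrt (by positivity)
  simp only [Real.sqrt_sq (norm_nonneg _)] at this
  exact this.congr_deriv (by field_simp)

theorem hasDerivAt_norm_add_smul {x v : E} {s : ℝ} (h0 : x + s • v ≠ 0) :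
    HasDerivAt (fun t : ℝ => ‖x + t • v‖) (⟪x + s • v, v⟫ / ‖x + s • v‖) s := by
  have hline : HasDerivAt (fun t : ℝ => x + t • v) v s := by
    simpa using ((hasDerivAt_id s).smul_const v).const_add x
  exact hline.norm h0

theorem deriv_deriv_comp_norm_add_smul {g g' : ℝ → ℝ} {g'' : ℝ} {x : E} (v : E) (hx : x ≠ 0)
    (hg : ∀ᶠ r in 𝓝 ‖x‖, HasDerivAt g (g' r) r) (hg' : HasDerivAt g' g'' ‖x‖) :
    deriv (deriv fun s : ℝ => g ‖x + s • v‖) 0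
      = g'' * (⟪x, v⟫ / ‖x‖) ^ 2
        + g' ‖x‖ * (‖v‖ ^ 2 - (⟪x, v⟫ / ‖x‖) ^ 2) / ‖x‖ := by
  have hcont : Continuous fun s : ℝ => x + s • v := by fun_prop
  have hnorm_tendsto : Tendsto (fun s : ℝ => ‖x + s • v‖) (𝓝 0) (𝓝 ‖x‖) := by
    simpa using (hcont.norm.tendsto 0)
  have hne : ∀ᶠ s in 𝓝 (0 : ℝ), x + s • v ≠ 0 :=
    hcont.continuousAt.eventually_ne (by simpa using hx)
  have hfirst : deriv (fun s : ℝ => g ‖x + s • v‖) =ᶠ[𝓝 0]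
      fun s => g' ‖x + s • v‖ * (⟪x + s • v, v⟫ / ‖x + s • v‖) := by
    filter_upwards [hne, hnorm_tendsto.eventually hg] with s hs hgs
    exact (hgs.comp s (hasDerivAt_norm_add_smul hs)).deriv
  have hN : HasDerivAt (fun s : ℝ => ‖x + s • v‖) (⟪x, v⟫ / ‖x‖) 0 := by
    simpa using hasDerivAt_norm_add_smul (s := 0) (v := v) (by simpa using hx)
  have hinner : HasDerivAt (fun s : ℝ => ⟪x + s • v, v⟫) (‖v‖ ^ 2) 0 := by
    have := (((hasDerivAt_id (0 : ℝ)).smul_const v).const_add x).inner ℝ (hasDerivAt_const 0 v)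
    simpa [real_inner_self_eq_norm_sq] using this
  have hsecond := (hg'.comp_of_eq 0 hN (by simp)).mul (hinner.div hN (by simpa using hx))
  rw [hfirst.deriv_eq]
  refine hsecond.deriv.trans ?_
  have hR : ‖x‖ ≠ 0 := norm_ne_zero_iff.mpr hx
  simp only [Function.comp_apply, Pi.div_apply, zero_smul, add_zero]
  field_simp

end RadialCalculus

theorem laplacian_comp_norm {g g' : ℝ → ℝ} {g'' : ℝ} {x : EuclideanSpace ℝ (Fin 3)} (hx : x ≠ 0)
    (hg : ∀ᶠ r in 𝓝 ‖x‖, HasDerivAt g (g' r) r) (hg' : HasDerivAt g' g'' ‖x‖) :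
    laplacian (fun y => g ‖y‖) x = g'' + 2 * g' ‖x‖ / ‖x‖ := by
  have hsq : ∑ i : Fin 3, ⟪x, EuclideanSpace.single i 1⟫ ^ 2 = ‖x‖ ^ 2 := by
    simp [EuclideanSpace.inner_single_right, EuclideanSpace.real_norm_sq_eq]
  have hR : ‖x‖ ≠ 0 := norm_ne_zero_iff.mpr hx
  simp only [laplacian, deriv_deriv_comp_norm_add_smul _ hx hg hg', PiLp.norm_single,
    norm_one, Fin.sum_univ_three] at hsq ⊢
  field_simp
  linear_combination (g'' * ‖x‖ - g' ‖x‖) * hsq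

theorem laplacian_div_norm {u u' : ℝ → ℝ} {u'' : ℝ} {x : EuclideanSpace ℝ (Fin 3)} (hx : x ≠ 0)
    (hu : ∀ᶠ r in 𝓝 ‖x‖, HasDerivAt u (u' r) r) (hu' : HasDerivAt u' u'' ‖x‖) :
    laplacian (fun y => u ‖y‖ / ‖y‖) x = u'' / ‖x‖ := by
  have hR : ‖x‖ ≠ 0 := norm_ne_zero_iff.mpr hx
  have hg : ∀ᶠ r in 𝓝 ‖x‖, HasDerivAt (fun r => u r / r) ((u' r * r - u r) / r ^ 2) r := by
    filter_upwards [hu, eventually_ne_nhds hR] with r hur hr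
    exact (hur.div (hasDerivAt_id r) hr).congr_deriv (by simp)
  have hg' : HasDerivAt (fun r => (u' r * r - u r) / r ^ 2)
      (u'' / ‖x‖ - 2 * (u' ‖x‖ * ‖x‖ - u ‖x‖) / ‖x‖ ^ 3) ‖x‖ := by
    refine (((hu'.mul (hasDerivAt_id _)).sub hu.self_of_nhds).fun_div (hasDerivAt_pow 2 _)
      (pow_ne_zero 2 hR)).congr_deriv ?_
    simp only [Pi.sub_apply, Pi.mul_apply, id]
    field_simp
    ring
  rw [laplacian_comp_norm hx hg hg']
  field_simp
  ring

noncomputable def dampedWave (k θ r : ℝ) : ℝ := Real.exp (-k * r) * Real.cos (θ - k * r)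

theorem hasDerivAt_dampedWave (k θ r : ℝ) :
    HasDerivAt (dampedWave k θ)
      (k * Real.exp (-k * r) * (Real.sin (θ - k * r) - Real.cos (θ - k * r))) r := by
  have hphase : HasDerivAt (fun r => θ - k * r) (-k) r := by
    simpa using ((hasDerivAt_id r).const_mul k).const_sub θ
  have hdecay : HasDerivAt (fun r => -k * r) (-k) r := by
    simpa using (hasDerivAt_id r).const_mul (-k)
  exact (hdecay.exp.mul hphase.cos).congr_deriv (by ring)

theorem deriv_dampedWave (k θ : ℝ) :
    deriv (dampedWave k θ)
      = fun r => k * Real.exp (-k * r) * (Real.sin (θ - k * r) - Real.cos (θ - k * r)) :=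
  funext fun r => (hasDerivAt_dampedWave k θ r).deriv

theorem hasDerivAt_deriv_dampedWave (k θ r : ℝ) :
    HasDerivAt (deriv (dampedWave k θ))
      (-2 * k ^ 2 * Real.exp (-k * r) * Real.sin (θ - k * r)) r := by
  have hphase : HasDerivAt (fun r => θ - k * r) (-k) r := by
    simpa using ((hasDerivAt_id r).const_mul k).const_sub θ
  have hdecay : HasDerivAt (fun r => -k * r) (-k) r := by
    simpa using (hasDerivAt_id r).const_mul (-k)
  rw [deriv_dampedWave]
  exact ((hdecay.exp.const_mul k).mul (hphase.sin.sub hphase.cos)).congr_deriv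
    (by simp only [Pi.sub_apply]; ring)

theorem hasDerivAt_dampedWave_phase (k θ r : ℝ) :
    HasDerivAt (fun θ => dampedWave k θ r) (-(Real.exp (-k * r) * Real.sin (θ - k * r))) θ := by
  simpa [dampedWave] using
    (((hasDerivAt_id θ).sub_const (k * r)).cos).const_mul (Real.exp (-k * r))

theorem thermalWave_eq_dampedWave (α f S φ : ℝ) (x : EuclideanSpace ℝ (Fin 3)) (t : ℝ) :
    thermalWave α f S φ x t
      = S / (4 * π * α) * dampedWave (Real.sqrt (π * f / α)) (2 * π * f * t + φ) ‖x‖ / ‖x‖ := by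
  rw [thermalWave, dampedWave]
  ring

theorem deriv_dampedWave_div_norm_eq_laplacian {α k ω : ℝ} (hk : 2 * α * k ^ 2 = ω)
    (C φ t : ℝ) {x : EuclideanSpace ℝ (Fin 3)} (hx : x ≠ 0) :
    deriv (fun τ => C * dampedWave k (ω * τ + φ) ‖x‖ / ‖x‖) t
      = α * laplacian (fun y => C * dampedWave k (ω * t + φ) ‖y‖ / ‖y‖) x := by
  have hθ : HasDerivAt (fun τ => ω * τ + φ) ω t := by
    simpa using ((hasDerivAt_id t).const_mul ω).add_const φ
  have htime : HasDerivAt (fun τ => C * dampedWave k (ω * τ + φ) ‖x‖ / ‖x‖) _ t :=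
    (((hasDerivAt_dampedWave_phase k _ ‖x‖).comp t hθ).const_mul C).div_const ‖x‖
  have hlap : laplacian (fun y => C * dampedWave k (ω * t + φ) ‖y‖ / ‖y‖) x = _ :=
    laplacian_div_norm hx
      (.of_forall fun r => (hasDerivAt_dampedWave k _ r).differentiableAt.hasDerivAt.const_mul C)
      ((hasDerivAt_deriv_dampedWave k _ ‖x‖).const_mul C)
  rw [htime.deriv, hlap, ← hk]
  ring

/-- The attenuated, phase-shifted sinusoidal point-source profile solves the
homogeneous heat equation `∂T/∂t = α·ΔT` away from the source. -/
theorem thermalWave_solves_heat_equation (α f S φ : ℝ) (hα : 0 < α)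
    (hf : 0 < f) :
    ∀ t : ℝ, ∀ x : EuclideanSpace ℝ (Fin 3), x ≠ 0 →
      deriv (fun τ : ℝ => thermalWave α f S φ x τ) t
        = α * laplacian (fun y => thermalWave α f S φ y t) x := by
  intro t x hx
  simp only [thermalWave_eq_dampedWave]
  refine deriv_dampedWave_div_norm_eq_laplacian ?_ _ φ t hx
  rw [Real.sq_sqrt (by positivity)]
  field_simp
end

section
/- For all B, ω, ω_m, t ∈ ℝ, the phase-modulated signal satisfies the expansion cos( ω·t + B·sin(ω_m·t) ) = Σ_{k ∈ ℤ} J_k(B) · cos( (ω + k·ω_m)·t ), where J_k(B) = (1/π) ∫_0^π cos( k·θ − B·sin(θ) ) dθ is the Bessel function of the first kind of integer order k, and the family ( J_k(B)·cos((ω + k·ω_m)t) )_{k ∈ ℤ} has sum cos(ωt + B sin(ω_m t)) (the series converges). -/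
/-! The function `θ ↦ exp (i B sin θ)` is `C¹` and `2π`-periodic, and its `n`-th Fourier
coefficient `(1/2π) ∫₀^{2π} exp (i (B sin θ - n θ)) dθ` is `J_n(B)`: the reflection
`θ ↦ 2π - θ` conjugates the integrand, so the integral is twice the integral of its real part
over `[0, π]`. For a periodic `C¹` function `f`, one integration by parts gives
`|f̂ n| = |f̂' n| / |n| ≤ (|f̂' n|² + n⁻²) / 2`, which is summable by Parseval; so the Fourier
series converges to `f` pointwise, which here is the Jacobi–Anger expansion
`exp (i B sin x) = ∑ J_k(B) exp (i k x)`. Multiply by `exp (i ω t)` at `x = ω_m t` and take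
real parts. -/

open Real MeasureTheory Filter Topology intervalIntegral

noncomputable def besselJ (k : ℤ) (x : ℝ) : ℝ :=
  (1 / π) * ∫ θ in (0 : ℝ)..π, Real.cos (k * θ - x * Real.sin θ)

open Complex (I)

section FourierSeries

variable {a b : ℝ} (hab : a < b) {f f' : ℝ → ℂ}

theorem fourierCoeffOn_eq_mul_fourierCoeffOn_deriv
    (hf : ∀ x ∈ Set.uIcc a b, HasDerivAt f (f' x) x) (hf' : IntervalIntegrable f' volume a b)
    (hper : f b = f a) {n : ℤ} (hn : n ≠ 0) :
    fourierCoeffOn hab f n = (b - a) / (2 * π * I * n) * fourierCoeffOn hab f' n := by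
  rw [fourierCoeffOn_of_hasDerivAt hab hn hf hf', hper, sub_self, mul_zero, zero_sub]
  field_simp

theorem summable_fourierCoeffOn_of_hasDerivAt (hf : ∀ x, HasDerivAt f (f' x) x)
    (hf' : Continuous f') (hper : f b = f a) : Summable (fourierCoeffOn hab f) := by
  obtain ⟨C, hC⟩ :=
    (isCompact_Icc (a := a) (b := b)).exists_bound_of_continuousOn hf'.continuousOn
  have hL2 : MemLp f' 2 (volume.restrict (Set.Ioc a b)) :=
    MemLp.of_bound hf'.aestronglyMeasurable C
      (ae_restrict_of_forall_mem measurableSet_Ioc fun x hx => hC x (Set.Ioc_subset_Icc_self hx))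
  have hsq : Summable fun n : ℤ => ‖fourierCoeffOn hab f' n‖ ^ 2 + 1 / (n : ℝ) ^ 2 :=
    (hasSum_sq_fourierCoeffOn hab hL2).summable.add
      (Real.summable_one_div_int_pow.mpr one_lt_two)
  refine Summable.of_norm_bounded_eventually (hsq.mul_left ((b - a) / (4 * π))) ?_
  filter_upwards [(Set.finite_singleton (0 : ℤ)).eventually_cofinite_notMem] with n hn
  have hn : n ≠ 0 := hn
  have hnorm : ‖fourierCoeffOn hab f n‖
      = (b - a) / (2 * π) * (‖fourierCoeffOn hab f' n‖ * |(n : ℝ)|⁻¹) := by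
    have hden : ‖(2 * π * I * n : ℂ)‖ = 2 * π * |(n : ℝ)| := by simp [abs_of_pos pi_pos]
    rw [fourierCoeffOn_eq_mul_fourierCoeffOn_deriv hab (fun x _ => hf x)
      (hf'.intervalIntegrable a b) hper hn, norm_mul, norm_div, hden, ← Complex.ofReal_sub,
      Complex.norm_real, Real.norm_of_nonneg (sub_nonneg.2 hab.le)]
    field_simp
  have hamgm := two_mul_le_add_sq ‖fourierCoeffOn hab f' n‖ |(n : ℝ)|⁻¹
  rw [inv_pow, sq_abs, inv_eq_one_div ((n : ℝ) ^ 2)] at hamgm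
  calc ‖fourierCoeffOn hab f n‖
      = (b - a) / (4 * π) * (2 * ‖fourierCoeffOn hab f' n‖ * |(n : ℝ)|⁻¹) := by rw [hnorm]; ring
    _ ≤ _ := by gcongr

theorem hasSum_fourierCoeffOn_smul_fourier (hf : ∀ x, HasDerivAt f (f' x) x)
    (hf' : Continuous f') (hper : Function.Periodic f (b - a)) (x : ℝ) :
    HasSum (fun n : ℤ => fourierCoeffOn hab f n • fourier n (x : AddCircle (b - a))) (f x) := by
  have : Fact (0 < b - a) := ⟨sub_pos.2 hab⟩
  have hcont : Continuous f := continuous_iff_continuousAt.2 fun x => (hf x).continuousAt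
  let F : C(AddCircle (b - a), ℂ) := ⟨hper.lift, continuous_coinduced_dom.mpr hcont⟩
  have hFf (x : ℝ) : F x = f x := hper.lift_coe x
  have hF : fourierCoeff F = fourierCoeffOn hab f := by
    ext n
    rw [fourierCoeff_eq_intervalIntegral _ n a, fourierCoeffOn_eq_integral, add_sub_cancel]
    simp only [hFf]
  have hsum := summable_fourierCoeffOn_of_hasDerivAt hab hf hf' (by simpa using hper a)
  have h :=
    has_pointwise_sum_fourier_series_of_summable (hF ▸ hsum) (x : AddCircle (b - a))
  rwa [hF, hFf] at h

end FourierSeries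

theorem integral_eq_integral_add_comp_two_mul_sub {E : Type*} [NormedAddCommGroup E]
    [NormedSpace ℝ E] {u : ℝ → E} (hu : Continuous u) (c : ℝ) :
    ∫ x in (0 : ℝ)..2 * c, u x = ∫ x in (0 : ℝ)..c, (u x + u (2 * c - x)) := by
  have hu' : Continuous fun x => u (2 * c - x) := hu.comp (by fun_prop)
  rw [integral_add (hu.intervalIntegrable _ _) (hu'.intervalIntegrable _ _),
    integral_comp_sub_left, sub_zero, show 2 * c - c = c by ring,
    integral_add_adjacent_intervals (hu.intervalIntegrable _ _) (hu.intervalIntegrable _ _)]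

theorem fourierCoeffOn_exp_mul_sin (B : ℝ) (n : ℤ) :
    fourierCoeffOn two_pi_pos (fun θ => Complex.exp (↑(B * sin θ) * I)) n = besselJ n B := by
  have hexp (x : ℝ) : fourier (-n) (x : AddCircle (2 * π - 0)) • Complex.exp (↑(B * sin x) * I)
      = Complex.exp (↑(B * sin x - n * x) * I) := by
    rw [fourier_coe_apply, smul_eq_mul, ← Complex.exp_add]
    congr 1
    push_cast
    field_simp
    ring
  have hreflect (x : ℝ) : Complex.exp (↑(B * sin x - n * x) * I)
      + Complex.exp (↑(B * sin (2 * π - x) - n * (2 * π - x)) * I)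
      = 2 * ↑(Real.cos (n * x - B * sin x)) := by
    have harg : (↑(B * sin (2 * π - x) - n * (2 * π - x)) * I : ℂ)
        = -↑(B * sin x - n * x) * I + (-n : ℤ) * (2 * π * I) := by
      rw [sin_two_pi_sub]; push_cast; ring
    rw [harg, Complex.exp_add, Complex.exp_int_mul_two_pi_mul_I, mul_one, ← Complex.two_cos,
      ← Complex.ofReal_cos, ← cos_neg, neg_sub]
  rw [fourierCoeffOn_eq_integral]
  simp_rw [hexp]
  rw [integral_eq_integral_add_comp_two_mul_sub (by fun_prop),
    integral_congr fun x _ => hreflect x, intervalIntegral.integral_const_mul, integral_ofReal,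
    besselJ, Complex.real_smul, sub_zero]
  push_cast
  field_simp

theorem hasSum_besselJ_mul_exp_mul_I (B x : ℝ) :
    HasSum (fun k : ℤ => (besselJ k B : ℂ) * Complex.exp (↑(k * x) * I))
      (Complex.exp (↑(B * sin x) * I)) := by
  have hderiv (θ : ℝ) : HasDerivAt (fun θ => Complex.exp (↑(B * sin θ) * I))
      (Complex.exp (↑(B * sin θ) * I) * (↑(B * cos θ) * I)) θ :=
    (((hasDerivAt_sin θ).const_mul B).ofReal_comp.mul_const I).cexp
  have hper : Function.Periodic (fun θ => Complex.exp (↑(B * sin θ) * I)) (2 * π - 0) := by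
    intro θ; simp [sin_add_two_pi]
  convert hasSum_fourierCoeffOn_smul_fourier two_pi_pos hderiv (by fun_prop) hper x using 2 with k
  rw [fourierCoeffOn_exp_mul_sin, fourier_coe_apply, smul_eq_mul]
  congr 2
  push_cast
  field_simp
  ring

/-- Expansion of a phase-modulated signal into its harmonics:
`cos(ωt + B sin(ω_m t)) = Σ_{k ∈ ℤ} J_k(B) cos((ω + k·ω_m)t)`, where the
family `(J_k(B) cos((ω + k·ω_m)t))_{k ∈ ℤ}` is summable with this sum. -/
theorem phase_modulation_bessel_expansion (B ω ωm t : ℝ) :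
    HasSum (fun k : ℤ => besselJ k B * Real.cos ((ω + k * ωm) * t))
      (Real.cos (ω * t + B * Real.sin (ωm * t))) := by
  have h := Complex.hasSum_re
    ((hasSum_besselJ_mul_exp_mul_I B (ωm * t)).mul_right (Complex.exp (↑(ω * t) * I)))
  convert h using 1
  · ext k
    rw [mul_assoc, ← Complex.exp_add, ← add_mul, ← Complex.ofReal_add, Complex.re_ofReal_mul,
      Complex.exp_ofReal_mul_I_re]
    ring_nf
  · rw [← Complex.exp_add, ← add_mul, ← Complex.ofReal_add, Complex.exp_ofReal_mul_I_re]
    ring_nf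
end
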